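/- Let λ > 0 and let V be the set of continuously differentiable functions φ : [−1,1] → ℝ with φ(−1) = φ(1) = 0. Define Ψ_λ(φ) = ∫_{−1}^{1} √(φ² + λ²·(φ′)²) dr, m̃(θ) = inf_{φ∈V} ( Ψ_λ(φ) − θ∫_{−1}^{1} φ dr ), and θ̂_Y(λ) = inf{ Ψ_λ(φ) : φ ∈ V, ∫_{−1}^{1} φ dr = 1 }. Then θ̂_Y(λ) = inf{ θ ≥ 0 : m̃(θ) < 0 }. -/

import Mathlib

/-- The set `V` of admissible test functions: C¹ functions on `[−1,1]`
vanishing at `±1`. -/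
def V : Set (ℝ → ℝ) := {φ | ContDiff ℝ 1 φ ∧ φ (-1) = 0 ∧ φ 1 = 0}

/-- The renormalized plastic dissipation `Ψ_λ(φ) = ∫_{-1}^{1} √(φ² + λ²·(φ')²) dr`. -/
noncomputable def Psi (lam : ℝ) (φ : ℝ → ℝ) : ℝ :=
  ∫ r in (-1 : ℝ)..1, Real.sqrt ((φ r) ^ 2 + lam ^ 2 * (deriv φ r) ^ 2)

/-- The reduced stability indicator
`m̃(θ) = inf_{φ ∈ V} (Ψ_λ(φ) − θ∫φ)` (valued in `EReal`, since the infimum may a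
priori be `−∞`). -/
noncomputable def mTilde (lam θ : ℝ) : EReal :=
  ⨅ φ : V, ((Psi lam φ.1 - θ * ∫ r in (-1 : ℝ)..1, φ.1 r : ℝ) : EReal)

/-- The renormalized yield shear stress
`θ̂_Y(λ) = inf { Ψ_λ(φ) : φ ∈ V, ∫φ = 1 }`. -/
noncomputable def thetaY (lam : ℝ) : ℝ :=
  sInf {t : ℝ | ∃ φ ∈ V, (∫ r in (-1 : ℝ)..1, φ r) = 1 ∧ Psi lam φ = t}

/-!
`Ψ_λ` is nonnegative and positively 1-homogeneous. Hence if `Ψ_λ(φ) < θ∫φ` with `θ ≥ 0`,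
then `∫φ > 0`, and rescaling `φ` to unit integral gives an admissible profile with
`Ψ_λ < θ`; conversely a unit-integral profile with `Ψ_λ(φ) < θ` witnesses `m̃(θ) < 0`.
So the stress levels with `m̃(θ) < 0` form exactly the open ray `(θ̂_Y(λ), ∞)`.
-/

open intervalIntegral

lemma Psi_nonneg (lam : ℝ) (φ : ℝ → ℝ) : 0 ≤ Psi lam φ :=
  integral_nonneg (by norm_num) fun _ _ => Real.sqrt_nonneg _

lemma Psi_const_mul (lam : ℝ) {c : ℝ} (hc : 0 ≤ c) {φ : ℝ → ℝ} (hφ : Differentiable ℝ φ) :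
    Psi lam (fun x => c * φ x) = c * Psi lam φ := by
  unfold Psi
  rw [← integral_const_mul]
  refine integral_congr fun x _ => ?_
  rw [deriv_const_mul c (hφ x),
    show (c * φ x) ^ 2 + lam ^ 2 * (c * deriv φ x) ^ 2
      = c ^ 2 * ((φ x) ^ 2 + lam ^ 2 * (deriv φ x) ^ 2) by ring,
    Real.sqrt_mul (sq_nonneg c), Real.sqrt_sq hc]

lemma const_mul_mem_V (c : ℝ) {φ : ℝ → ℝ} (hφ : φ ∈ V) : (fun x => c * φ x) ∈ V :=
  ⟨contDiff_const.mul hφ.1, by simp [hφ.2.1], by simp [hφ.2.2]⟩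

lemma parabola_mem_V : (fun r : ℝ => 3 / 4 * (1 - r ^ 2)) ∈ V :=
  ⟨contDiff_const.mul (contDiff_const.sub (contDiff_id.pow 2)), by norm_num, by norm_num⟩

lemma integral_parabola : ∫ r in (-1 : ℝ)..1, 3 / 4 * (1 - r ^ 2) = 1 := by
  rw [integral_const_mul, integral_sub intervalIntegrable_const (intervalIntegrable_pow 2),
    integral_const, integral_pow]
  norm_num

lemma nonempty_unitIntegral_dissipations (lam : ℝ) :
    {t : ℝ | ∃ φ ∈ V, (∫ r in (-1 : ℝ)..1, φ r) = 1 ∧ Psi lam φ = t}.Nonempty :=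
  ⟨_, _, parabola_mem_V, integral_parabola, rfl⟩

lemma bddBelow_unitIntegral_dissipations (lam : ℝ) :
    BddBelow {t : ℝ | ∃ φ ∈ V, (∫ r in (-1 : ℝ)..1, φ r) = 1 ∧ Psi lam φ = t} :=
  ⟨0, fun _ ⟨φ, _, _, hψ⟩ => hψ ▸ Psi_nonneg lam φ⟩

lemma thetaY_nonneg (lam : ℝ) : 0 ≤ thetaY lam :=
  le_csInf (nonempty_unitIntegral_dissipations lam) fun _ ⟨φ, _, _, hψ⟩ => hψ ▸ Psi_nonneg lam φ

lemma thetaY_lt_iff (lam θ : ℝ) :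
    thetaY lam < θ ↔ ∃ φ ∈ V, (∫ r in (-1 : ℝ)..1, φ r) = 1 ∧ Psi lam φ < θ := by
  rw [thetaY, csInf_lt_iff (bddBelow_unitIntegral_dissipations lam)
    (nonempty_unitIntegral_dissipations lam)]
  constructor
  · rintro ⟨_, ⟨φ, hφ, hint, rfl⟩, hlt⟩
    exact ⟨φ, hφ, hint, hlt⟩
  · rintro ⟨φ, hφ, hint, hlt⟩
    exact ⟨_, ⟨φ, hφ, hint, rfl⟩, hlt⟩

lemma mTilde_neg_iff (lam θ : ℝ) :
    mTilde lam θ < 0 ↔ ∃ φ ∈ V, Psi lam φ < θ * ∫ r in (-1 : ℝ)..1, φ r := by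
  simp only [mTilde, iInf_lt_iff, EReal.coe_neg', sub_neg, Subtype.exists, exists_prop]

lemma exists_unitIntegral_of_Psi_lt {lam θ : ℝ} (hθ : 0 ≤ θ) {φ : ℝ → ℝ} (hφ : φ ∈ V)
    (hlt : Psi lam φ < θ * ∫ r in (-1 : ℝ)..1, φ r) :
    ∃ ψ ∈ V, (∫ r in (-1 : ℝ)..1, ψ r) = 1 ∧ Psi lam ψ < θ := by
  set I := ∫ r in (-1 : ℝ)..1, φ r
  have hI : 0 < I := pos_of_mul_pos_right ((Psi_nonneg lam φ).trans_lt hlt) hθ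
  refine ⟨fun x => I⁻¹ * φ x, const_mul_mem_V _ hφ, ?_, ?_⟩
  · rw [integral_const_mul, inv_mul_cancel₀ hI.ne']
  · rw [Psi_const_mul lam (inv_nonneg.mpr hI.le) (hφ.1.differentiable one_ne_zero),
      inv_mul_lt_iff₀ hI, mul_comm]
    exact hlt

lemma instability_set_eq_Ioi (lam : ℝ) :
    {θ : ℝ | 0 ≤ θ ∧ mTilde lam θ < 0} = Set.Ioi (thetaY lam) := by
  ext θ
  simp only [Set.mem_ofPred_eq, Set.mem_Ioi, mTilde_neg_iff, thetaY_lt_iff]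
  constructor
  · rintro ⟨hθ, φ, hφ, hlt⟩
    exact exists_unitIntegral_of_Psi_lt hθ hφ hlt
  · rintro ⟨φ, hφ, hint, hlt⟩
    exact ⟨(Psi_nonneg lam φ).trans hlt.le, φ, hφ, by rwa [hint, mul_one]⟩

theorem thetaY_eq_inf_instability_general (lam : ℝ) :
    thetaY lam = sInf {θ : ℝ | 0 ≤ θ ∧ mTilde lam θ < 0} := by
  rw [instability_set_eq_Ioi, csInf_Ioi]

/-- Core of the proof of Theorem 3.1 (equations (32)–(33)): the constrained infimum
`θ̂_Y(λ)` of the dissipation equals the smallest stress level at which the reduced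
stability indicator becomes negative. -/
theorem thetaY_eq_inf_instability (lam : ℝ) (hlam : 0 < lam) :
    thetaY lam = sInf {θ : ℝ | 0 ≤ θ ∧ mTilde lam θ < 0} :=
  thetaY_eq_inf_instability_general lam
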